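/- Let μ be a partition of length l, and for each i = 1,…,l let M_i be a multiset of μ_i positive integers. Then there exists a unique filling σ : dg(μ) → ℤ₊ such that for each i the multiset of entries of σ in row i equals M_i and inv(σ) = 0. -/

import Mathlib

open Finset MvPolynomial

namespace HHL

/-! ### Diagrams, fillings and the statistics `inv` and `maj` -/

/-- The cells of the Young diagram of the partition `μ` (given as the list of
its row lengths `μ_1, μ_2, …`); the cell `(i,j)` lies in row `i` (from the
bottom, French style) and column `j`, with `1 ≤ i ≤ ℓ(μ)`, `1 ≤ j ≤ μ_i`. -/
def cells (μ : List ℕ) : Finset (ℕ × ℕ) :=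
  (Finset.Icc 1 μ.length ×ˢ Finset.Icc 1 (μ.foldr max 0)).filter
    (fun u => u.2 ≤ μ.getD (u.1 - 1) 0)

/-- `μ` is a partition: a weakly decreasing list of positive integers. -/
def IsPartitionList (μ : List ℕ) : Prop := μ.Pairwise (· ≥ ·) ∧ ∀ x ∈ μ, 0 < x

/-- The arm of a cell: the number of cells strictly to its right in its row. -/
def arm (μ : List ℕ) (u : ℕ × ℕ) : ℕ :=
  ((cells μ).filter (fun v => v.1 = u.1 ∧ u.2 < v.2)).card

/-- The leg of a cell: the number of cells strictly above it in its column. -/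
def leg (μ : List ℕ) (u : ℕ × ℕ) : ℕ :=
  ((cells μ).filter (fun v => v.2 = u.2 ∧ u.1 < v.1)).card

/-- `u` precedes `v` in the reading order (row by row from the top row down,
left to right within each row). -/
def ReadBefore (u v : ℕ × ℕ) : Prop := v.1 < u.1 ∨ (u.1 = v.1 ∧ u.2 < v.2)

instance (u v : ℕ × ℕ) : Decidable (ReadBefore u v) := by
  unfold ReadBefore; infer_instance

/-- `u` and `v` attack each other and `u` precedes `v` in reading order: either
they are in the same row with `u` to the left, or `u` is one row above `v` and
strictly to its right. -/
def AttackOrd (u v : ℕ × ℕ) : Prop :=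
  (u.1 = v.1 ∧ u.2 < v.2) ∨ (u.1 = v.1 + 1 ∧ v.2 < u.2)

instance (u v : ℕ × ℕ) : Decidable (AttackOrd u v) := by
  unfold AttackOrd; infer_instance

/-- `u` and `v` attack each other. -/
def Attack (u v : ℕ × ℕ) : Prop := AttackOrd u v ∨ AttackOrd v u

instance (u v : ℕ × ℕ) : Decidable (Attack u v) := by
  unfold Attack; infer_instance

section Stats

variable {V : Type} (μ : List ℕ) (Ind : V → V → Prop) [DecidableRel Ind] (σ : ℕ × ℕ → V)

/-- The set `Inv(σ)` of inversions of a filling `σ`, recorded as ordered pairs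
`(u,v)` with `u` attacking `v`, `u` preceding `v` in reading order, and
`I(σ(u),σ(v)) = 1`; here `Ind x y` means `I(x,y) = 1` (for ordinary fillings
`Ind x y ↔ x > y`). -/
def invPairs : Finset ((ℕ × ℕ) × (ℕ × ℕ)) :=
  ((cells μ) ×ˢ (cells μ)).filter fun p => AttackOrd p.1 p.2 ∧ Ind (σ p.1) (σ p.2)

/-- The descent set `Des(σ)`: cells `u = (i+1,j)` with `v = (i,j) ∈ dg(μ)` and
`I(σ(u),σ(v)) = 1`. -/
def desCells : Finset (ℕ × ℕ) :=
  (cells μ).filter fun u => (u.1 - 1, u.2) ∈ cells μ ∧ Ind (σ u) (σ (u.1 - 1, u.2))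

/-- `maj(σ) = Σ_{u ∈ Des(σ)} (leg(u) + 1)`. -/
def majStat : ℕ := ∑ u ∈ desCells μ Ind σ, (leg μ u + 1)

/-- `inv(σ) = |Inv(σ)| − Σ_{u ∈ Des(σ)} arm(u)`. -/
def invStat : ℕ := (invPairs μ Ind σ).card - ∑ u ∈ desCells μ Ind σ, arm μ u

end Stats

/-- For ordinary (positive-integer valued) fillings, `I(x,y) = 1` iff `x > y`. -/
def natInd : ℕ → ℕ → Prop := fun x y => y < x

instance : DecidableRel natInd := fun _ _ => by unfold natInd; infer_instance

/-- Extend a function defined on the cells of `μ` to a total function. -/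
def extendF {V : Type} (μ : List ℕ) (d : V) (f : {u // u ∈ cells μ} → V) : ℕ × ℕ → V :=
  fun u => if h : u ∈ cells μ then f ⟨u, h⟩ else d

/-- A filling of `dg(μ)` with entries in `{1, …, N}`, encoded by a function to
`Fin N` (value `k` means the entry `k + 1`), as a total function `ℕ × ℕ → ℕ`. -/
def natFill (μ : List ℕ) {N : ℕ} (f : {u // u ∈ cells μ} → Fin N) : ℕ × ℕ → ℕ :=
  extendF μ 0 fun u => (f u).val + 1

/-- Haglund's combinatorial formula
`C_μ(x_1,…,x_N;q,t) = Σ_σ q^{inv(σ)} t^{maj(σ)} x^σ`, a polynomial in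
`x_1,…,x_N` with coefficients in `ℤ[q,t]`, where `q = C (X 0)`, `t = C (X 1)`. -/
noncomputable def Cmu (μ : List ℕ) (N : ℕ) :
    MvPolynomial (Fin N) (MvPolynomial (Fin 2) ℤ) :=
  ∑ f : {u // u ∈ cells μ} → Fin N,
    C ((X 0 : MvPolynomial (Fin 2) ℤ) ^ invStat μ natInd (natFill μ f) *
       (X 1 : MvPolynomial (Fin 2) ℤ) ^ majStat μ natInd (natFill μ f)) *
    ∏ u, X (f u)

/-! ### Skew diagrams and LLT polynomials -/

/-- A pair of partitions `(λ, μ)` with `μ ⊆ λ`, representing the skew diagram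
`λ∖μ`. -/
def IsSkewPair (p : List ℕ × List ℕ) : Prop :=
  IsPartitionList p.1 ∧ IsPartitionList p.2 ∧ ∀ i, p.2.getD i 0 ≤ p.1.getD i 0

/-- The cells of the skew diagram `λ∖μ`. -/
def skewCells (p : List ℕ × List ℕ) : Finset (ℕ × ℕ) := cells p.1 \ cells p.2

/-- The content `c(u) = i − j` of the cell `u = (i,j)`. -/
def content (u : ℕ × ℕ) : ℤ := (u.1 : ℤ) - (u.2 : ℤ)

/-- The disjoint union of the cells of a tuple of skew diagrams. -/
abbrev TDom {k : ℕ} (ν : Fin k → List ℕ × List ℕ) : Type :=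
  Σ i : Fin k, {u // u ∈ skewCells (ν i)}

/-- `f` (with `f ⟨i,u⟩` the entry of the `i`-th tableau at the cell `u`) is a
tuple of semistandard Young tableaux: entries weakly increasing along each row
and strictly increasing up each column. -/
def IsSSYTtuple {k : ℕ} (ν : Fin k → List ℕ × List ℕ) (f : TDom ν → ℕ) : Prop :=
  ∀ i : Fin k, ∀ u v : {u // u ∈ skewCells (ν i)},
    (u.1.1 = v.1.1 ∧ u.1.2 ≤ v.1.2 → f ⟨i, u⟩ ≤ f ⟨i, v⟩) ∧
    (u.1.2 = v.1.2 ∧ u.1.1 < v.1.1 → f ⟨i, u⟩ < f ⟨i, v⟩)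

instance {k : ℕ} (ν : Fin k → List ℕ × List ℕ) (f : TDom ν → ℕ) :
    Decidable (IsSSYTtuple ν f) := by unfold IsSSYTtuple; infer_instance

/-- The number of inversions of a tuple of tableaux: pairs of entries
`T^(i)(u) > T^(j)(v)` with either `i < j` and `c(u) = c(v)`, or `i > j` and
`c(u) = c(v) + 1`. -/
def lltInv {k : ℕ} (ν : Fin k → List ℕ × List ℕ) (f : TDom ν → ℕ) : ℕ :=
  (Finset.univ.filter fun p : TDom ν × TDom ν =>
    ((p.1.1 < p.2.1 ∧ content p.1.2.1 = content p.2.2.1) ∨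
     (p.2.1 < p.1.1 ∧ content p.1.2.1 = content p.2.2.1 + 1)) ∧
    f p.2 < f p.1).card

/-- The LLT polynomial `G_ν(x_1,…,x_N;q) = Σ_T q^{inv(T)} x^T` in `N`
variables, with coefficients in `ℤ[q]` (`q = C Polynomial.X`); tableau entries
in `{1,…,N}` are encoded by `Fin N` (value `k` means entry `k + 1`). -/
noncomputable def llt {k : ℕ} (ν : Fin k → List ℕ × List ℕ) (N : ℕ) :
    MvPolynomial (Fin N) (Polynomial ℤ) :=
  ∑ f ∈ Finset.univ.filter (fun f : TDom ν → Fin N =>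
      IsSSYTtuple ν (fun a => (f a).val + 1)),
    C (Polynomial.X ^ lltInv ν (fun a => (f a).val + 1)) * ∏ a, X (f a)

/-! ### The super alphabet -/

/-- The super alphabet `A = {1, 1̄, 2, 2̄, …}`: the letter `(a, b)` has absolute
value `a + 1` and is negative (barred) iff `b = true`. -/
abbrev SLetter : Type := ℕ × Bool

/-- The absolute value of a super letter. -/
def sAbs (x : SLetter) : ℕ := x.1 + 1

/-- The ordering `<₁`: `1 < 1̄ < 2 < 2̄ < ⋯`. -/
def lt1 (x y : SLetter) : Prop :=
  x.1 < y.1 ∨ (x.1 = y.1 ∧ x.2 = false ∧ y.2 = true)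

instance : DecidableRel lt1 := fun _ _ => by unfold lt1; infer_instance

/-- The ordering `<₂`: `1 < 2 < 3 < ⋯ < 3̄ < 2̄ < 1̄`. -/
def lt2 (x y : SLetter) : Prop :=
  (x.2 = false ∧ y.2 = false ∧ x.1 < y.1) ∨ (x.2 = false ∧ y.2 = true) ∨
    (x.2 = true ∧ y.2 = true ∧ y.1 < x.1)

instance : DecidableRel lt2 := fun _ _ => by unfold lt2; infer_instance

/-- Given a total order `lt` on the super alphabet, `IndOf lt x y` holds iff
`I(x,y) = 1`, i.e. `x > y`, or `x = y` is a negative letter. -/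
def IndOf (lt : SLetter → SLetter → Prop) (x y : SLetter) : Prop :=
  lt y x ∨ (x = y ∧ x.2 = true)

instance (lt : SLetter → SLetter → Prop) [DecidableRel lt] : DecidableRel (IndOf lt) :=
  fun _ _ => by unfold IndOf; infer_instance

/-- A super filling of `dg(μ)` with letters of absolute value at most `N`, as a
total function (the value `(a, b)` with `a : Fin N` means the letter of
absolute value `a + 1`, barred iff `b`). -/
def superFill (μ : List ℕ) {N : ℕ} (f : {u // u ∈ cells μ} → Fin N × Bool) :
    ℕ × ℕ → SLetter :=
  extendF μ (0, false) fun u => ((f u).1.val, (f u).2)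

/-- A super filling with entries in `{1, 1̄}` (`f u = true` means entry `1̄`). -/
def boolFill (μ : List ℕ) (f : {u // u ∈ cells μ} → Bool) : ℕ × ℕ → SLetter :=
  extendF μ (0, false) fun u => ((0 : ℕ), f u)

/-- `m(σ)`: the number of negative entries of a super filling. -/
def negCount (μ : List ℕ) (σ : ℕ × ℕ → SLetter) : ℕ :=
  ((cells μ).filter fun u => (σ u).2 = true).card

/-- `p(σ)`: the number of positive entries of a super filling. -/
def posCount (μ : List ℕ) (σ : ℕ × ℕ → SLetter) : ℕ :=
  ((cells μ).filter fun u => (σ u).2 = false).card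

/-- A super filling is non-attacking if entries in attacking cells have
distinct absolute values. -/
def NonAttacking (μ : List ℕ) (σ : ℕ × ℕ → SLetter) : Prop :=
  ∀ u ∈ cells μ, ∀ v ∈ cells μ, Attack u v → sAbs (σ u) ≠ sAbs (σ v)

instance (μ : List ℕ) (σ : ℕ × ℕ → SLetter) : Decidable (NonAttacking μ σ) := by
  unfold NonAttacking; infer_instance

/-! ### Conjugate partitions, ribbons, connectivity -/

/-- `conj μ j = μ'_j`, the number of rows of `μ` of length at least `j`. -/
def conj (μ : List ℕ) (j : ℕ) : ℕ :=
  ((Finset.range μ.length).filter fun i => j ≤ μ.getD i 0).card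

/-- The transpose `μ'` of a partition, as a list. -/
def conjList (μ : List ℕ) : List ℕ :=
  (List.range (μ.foldr max 0)).map fun j => conj μ (j + 1)

/-- Transpose of a skew shape: `λ∖μ ↦ λ'∖μ'`. -/
def transposePair (p : List ℕ × List ℕ) : List ℕ × List ℕ :=
  (conjList p.1, conjList p.2)

/-- Two cells are adjacent (share an edge). -/
def AdjCell (u v : ℕ × ℕ) : Prop :=
  (u.1 = v.1 ∧ (u.2 = v.2 + 1 ∨ v.2 = u.2 + 1)) ∨
  (u.2 = v.2 ∧ (u.1 = v.1 + 1 ∨ v.1 = u.1 + 1))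

/-- A set of cells is connected (any two cells are joined by a path of
edge-adjacent cells inside the set). -/
def ConnSet (s : Finset (ℕ × ℕ)) : Prop :=
  ∀ u ∈ s, ∀ v ∈ s, Relation.ReflTransGen (fun a b => a ∈ s ∧ b ∈ s ∧ AdjCell a b) u v

/-- A set of cells contains no 2×2 block. -/
def No2x2 (s : Finset (ℕ × ℕ)) : Prop :=
  ¬ ∃ i j, (i, j) ∈ s ∧ (i + 1, j) ∈ s ∧ (i, j + 1) ∈ s ∧ (i + 1, j + 1) ∈ s

/-! ### Reading words and cocharge -/

/-- Boolean comparison realizing the reading order. -/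
def readLe (u v : ℕ × ℕ) : Bool :=
  decide (v.1 < u.1) || (decide (u.1 = v.1) && decide (u.2 ≤ v.2))

/-- The reading word of a filling `σ` of `dg(μ)`: its entries listed in reading
order. -/
noncomputable def readingWord (μ : List ℕ) (σ : ℕ × ℕ → ℕ) : List ℕ :=
  ((cells μ).toList.mergeSort readLe).map σ

/-- Boolean comparison for the cocharge-word ordering of the cells: entries of
`σ` decreasing and, within constant segments of `σ`, cells in decreasing
reading order. -/
def cwordLe (σ : ℕ × ℕ → ℕ) (u v : ℕ × ℕ) : Bool :=
  decide (σ v < σ u) ||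
    (decide (σ u = σ v) &&
      (decide (u.1 < v.1) || (decide (u.1 = v.1) && decide (v.2 ≤ u.2))))

/-- The cocharge word of a filling: the row indices of the cells, listed so that
the entries are decreasing, with ties broken by decreasing reading order. -/
noncomputable def cword (μ : List ℕ) (σ : ℕ × ℕ → ℕ) : List ℕ :=
  ((cells μ).toList.mergeSort (cwordLe σ)).map Prod.fst

/-- Cocharge of a word that is a permutation of `{1,…,n}`:
`Σ_{i ∈ D(w⁻¹)} (n − i)`, where `i ∈ D(w⁻¹)` iff `i + 1` occurs before `i`. -/
def cochargePerm (w : List ℕ) : ℕ :=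
  ∑ i ∈ Finset.Icc 1 (w.length - 1),
    if w.idxOf (i + 1) < w.idxOf i then w.length - i else 0

/-- The (0-based) positions of the letter `a` in `w`. -/
def letterPositions (w : List ℕ) (a : ℕ) : Finset ℕ :=
  (Finset.range w.length).filter fun k => w.getD k 0 = a

/-- The position `k_i` for the letter `a`: the rightmost occurrence of `a`
strictly to the left of `bound` if there is one, otherwise the rightmost
occurrence of `a`. -/
def choosePos (w : List ℕ) (a : ℕ) (bound : Option ℕ) : Option ℕ :=
  match bound with
  | none => (letterPositions w a).max
  | some b =>
      let s := (letterPositions w a).filter (· < b)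
      if s.Nonempty then s.max else (letterPositions w a).max

/-- `posListAux w i = [k_i, k_{i-1}, …, k_1]` (as options). -/
def posListAux (w : List ℕ) : ℕ → List (Option ℕ)
  | 0 => []
  | i + 1 =>
      let rest := posListAux w i
      choosePos w (i + 1) (rest.headD none) :: rest

/-- The set `S = {k_1, …, k_l}` of positions extracted in the cocharge
recursion, where `l` is the largest letter of `w`. -/
def extractSet (w : List ℕ) : Finset ℕ :=
  ((posListAux w (w.foldr max 0)).filterMap id).toFinset

/-- The subword of `w` at the positions in `S` (in increasing position order). -/
def subwordOn (w : List ℕ) (S : Finset ℕ) : List ℕ :=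
  ((List.range w.length).filter fun k => decide (k ∈ S)).map fun k => w.getD k 0

/-- The subword of `w` at the positions *not* in `S`. -/
def subwordOff (w : List ℕ) (S : Finset ℕ) : List ℕ :=
  ((List.range w.length).filter fun k => decide (k ∉ S)).map fun k => w.getD k 0

/-- Fuelled cocharge recursion: `cocharge w = cocharge y + cocharge z`, where
`y` is the extracted subword (a permutation of `{1,…,l}`) and `z` is the
complementary subword. -/
def cochargeAux : ℕ → List ℕ → ℕ
  | 0, _ => 0
  | fuel + 1, w =>
      let S := extractSet w
      let z := subwordOff w S
      if z.length < w.length then cochargePerm (subwordOn w S) + cochargeAux fuel z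
      else cochargePerm (subwordOn w S)

/-- The cocharge of a word of partition content. -/
def cocharge (w : List ℕ) : ℕ := cochargeAux w.length w

/-! ### Yamanouchi words and crystal operators -/

/-- A word is Yamanouchi if every final segment contains at least as many
letters `i` as letters `i + 1`, for every `i ≥ 1`. -/
def IsYamanouchi (w : List ℕ) : Prop :=
  ∀ k i, ((w.drop k).count (i + 2)) ≤ ((w.drop k).count (i + 1))

noncomputable instance : DecidablePred IsYamanouchi := fun _ => Classical.propDecidable _

/-- The letters `i` (close, `false`) and `i + 1` (open, `true`) of `w`, as a
list of (position, is-open) tokens in position order. -/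
def tokens (i : ℕ) (w : List ℕ) : List (ℕ × Bool) :=
  (List.range w.length).filterMap fun k =>
    if w.getD k 0 = i + 1 then some (k, true)
    else if w.getD k 0 = i then some (k, false) else none

/-- Stack pass performing the repeated deletion of adjacent matched pairs (an
`i + 1` immediately followed by an `i` in the current subword). The first
argument is the (reversed) list of surviving tokens so far. -/
def reduceTokens : List (ℕ × Bool) → List (ℕ × Bool) → List (ℕ × Bool)
  | acc, [] => acc.reverse
  | a :: acc', t :: rest =>
      if a.2 ∧ ¬ t.2 then reduceTokens acc' rest
      else reduceTokens (t :: a :: acc') rest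
  | [], t :: rest => reduceTokens [t] rest

/-- The surviving letters of `{i, i + 1}` in `w` after matched-pair deletion. -/
def survivors (i : ℕ) (w : List ℕ) : List (ℕ × Bool) := reduceTokens [] (tokens i w)

/-- The crystal raising operator `E_i` on words: change the first surviving
(unmatched) letter `i + 1` to `i`; `none` encodes `E_i w = 0`. -/
def crystalE (i : ℕ) (w : List ℕ) : Option (List ℕ) :=
  match (survivors i w).find? (fun t => t.2) with
  | none => none
  | some t => some (w.set t.1 i)

/-! ### Straight-shape tableaux and Schur polynomials -/

/-- Semistandard tableau condition for a filling of the cells of `lam`. -/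
def IsSSYTcells (lam : List ℕ) (T : {u // u ∈ cells lam} → ℕ) : Prop :=
  ∀ u v : {u // u ∈ cells lam},
    (u.1.1 = v.1.1 ∧ u.1.2 ≤ v.1.2 → T u ≤ T v) ∧
    (u.1.2 = v.1.2 ∧ u.1.1 < v.1.1 → T u < T v)

instance (lam : List ℕ) (T : {u // u ∈ cells lam} → ℕ) :
    Decidable (IsSSYTcells lam T) := by unfold IsSSYTcells; infer_instance

/-- The Schur polynomial `s_λ(x_1,…,x_N) = Σ_{T ∈ SSYT(λ), entries ≤ N} x^T`,
with coefficients in a commutative ring `R`. -/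
noncomputable def schurPoly (R : Type) [CommRing R] (lam : List ℕ) (N : ℕ) :
    MvPolynomial (Fin N) R :=
  ∑ T ∈ Finset.univ.filter (fun T : {u // u ∈ cells lam} → Fin N =>
      IsSSYTcells lam (fun u => (T u).val + 1)),
    ∏ u, X (T u)

/-- The decreasing list of parts of `p : Nat.Partition n`. -/
def partnList {n : ℕ} (p : n.Partition) : List ℕ :=
  (Multiset.sort p.parts (· ≤ ·)).reverse

/-!
Cut the attacking pairs and the arms along the triples `(u, v, w)`: `u` left of `v` in one row
and `w` directly below `u`. With `x, y, z` the entries of `u, v, w` (`z = 0` if there is no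
cell `w`), the triple carries the inversions `[x > y] + [y > z]` and the part `[x > z]` of the
arm of the descent at `u`, and `[x > z] ≤ [x > y] + [y > z]`. Hence `inv σ = 0` exactly when
equality holds for every triple, which says that `x` comes before `y` in the order `coinvKey z`:
first the entries larger than `z`, then the others, each group increasing. So, given the row
below, a row is forced from left to right: its `j`-th entry is the least remaining element of
its multiset for the order attached to the entry below position `j`. Building the rows from
the bottom up gives both existence and uniqueness.
-/

lemma getD_le_foldr_max (μ : List ℕ) (i : ℕ) : μ.getD i 0 ≤ μ.foldr max 0 := by
  induction μ generalizing i with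
  | nil => simp
  | cons a t ih =>
    cases i with
    | zero => simp
    | succ n => exact (ih n).trans (le_max_right _ _)

lemma mem_cells {μ : List ℕ} {i j : ℕ} :
    (i, j) ∈ cells μ ↔ 1 ≤ i ∧ i ≤ μ.length ∧ 1 ≤ j ∧ j ≤ μ.getD (i - 1) 0 := by
  simp only [cells, Finset.mem_filter, Finset.mem_product, Finset.mem_Icc]
  exact ⟨fun ⟨⟨h1, h2, _⟩, h3⟩ => ⟨h1.1, h1.2, h2, h3⟩,
    fun ⟨h1, h2, h3, h4⟩ => ⟨⟨⟨h1, h2⟩, h3, h4.trans (getD_le_foldr_max _ _)⟩, h4⟩⟩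

@[simp]
lemma extendF_val {V : Type} {μ : List ℕ} (d : V) (f : {u // u ∈ cells μ} → V)
    (u : {u // u ∈ cells μ}) : extendF μ d f u = f u :=
  dif_pos u.2

lemma extendF_of_notMem {V : Type} {μ : List ℕ} (d : V) (f : {u // u ∈ cells μ} → V)
    {u : ℕ × ℕ} (hu : u ∉ cells μ) : extendF μ d f u = d :=
  dif_neg hu

section Greedy

variable {α β : Type*} [LinearOrder β]

def IsGreedy (key : ℕ → α → β) (w : List α) : Prop :=
  ∀ j k (hjk : j < k) (hk : k < w.length), key j w[j] ≤ key j w[k]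

@[simp]
lemma isGreedy_nil (key : ℕ → α → β) : IsGreedy key [] := fun _ _ _ hk => absurd hk (by simp)

lemma isGreedy_cons {key : ℕ → α → β} {x : α} {t : List α} :
    IsGreedy key (x :: t) ↔ (∀ y ∈ t, key 0 x ≤ key 0 y) ∧ IsGreedy (fun j => key (j + 1)) t := by
  constructor
  · intro h
    refine ⟨fun y hy => ?_, fun j k hjk hk => h (j + 1) (k + 1) (by omega) (by simpa using hk)⟩
    obtain ⟨k, hk, rfl⟩ := List.getElem_of_mem hy
    exact h 0 (k + 1) k.succ_pos (by simpa using hk)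
  · rintro ⟨hx, ht⟩ j k hjk hk
    obtain ⟨k, rfl⟩ : ∃ k', k = k' + 1 := ⟨k - 1, by omega⟩
    rcases j with _ | j
    · exact hx _ (List.getElem_mem _)
    · exact ht j k (by omega) (by simpa using hk)

/-- The entry at position `j` is forced: it is the remaining element of least `key j`. -/
theorem existsUnique_isGreedy [DecidableEq α] (key : ℕ → α → β)
    (hkey : ∀ j, Function.Injective (key j)) (R : Multiset α) :
    ∃! w : List α, (w : Multiset α) = R ∧ IsGreedy key w := by
  induction R using Multiset.strongInductionOn generalizing key with
  | ih R IH =>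
  rcases eq_or_ne R 0 with rfl | hR
  · refine ⟨[], ⟨rfl, isGreedy_nil key⟩, fun w hw => ?_⟩
    simpa using hw.1
  obtain ⟨x, hxR, hxmin⟩ := Multiset.exists_min_image (key 0) hR
  obtain ⟨t, ⟨htR, ht⟩, htuniq⟩ :=
    IH (R.erase x) (Multiset.erase_lt.2 hxR) (fun j => key (j + 1)) (fun j => hkey (j + 1))
  refine ⟨x :: t, ⟨?_, isGreedy_cons.2 ⟨fun y hy => hxmin y ?_, ht⟩⟩, ?_⟩
  · rw [← Multiset.cons_coe, htR, Multiset.cons_erase hxR]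
  · exact Multiset.mem_of_mem_erase (htR ▸ Multiset.mem_coe.2 hy)
  rintro (_ | ⟨a, s⟩) ⟨hwR, hw⟩
  · exact absurd hwR.symm (by simpa using hR)
  obtain ⟨has, hs⟩ := isGreedy_cons.1 hw
  rw [← Multiset.cons_coe] at hwR
  have hax : a = x := by
    refine hkey 0 (le_antisymm ?_ (hxmin a (hwR ▸ Multiset.mem_cons_self a s)))
    rcases Multiset.mem_cons.1 (hwR ▸ hxR) with rfl | hx
    · exact le_rfl
    · exact has x hx
  subst hax
  rw [htuniq s ⟨by rw [← hwR, Multiset.erase_cons_head], hs⟩]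

end Greedy

def coinvKey (z x : ℕ) : Bool ×ₗ ℕ := toLex (decide (x ≤ z), x)

lemma coinvKey_injective (z : ℕ) : Function.Injective (coinvKey z) :=
  fun x y h => by simpa [coinvKey] using congrArg (fun p => (ofLex p).2) h

lemma coinvKey_le_coinvKey {z x y : ℕ} :
    coinvKey z x ≤ coinvKey z y ↔ (z < x ∧ y ≤ z) ∨ (x ≤ y ∧ (z < x ∨ y ≤ z)) := by
  by_cases hx : x ≤ z <;> by_cases hy : y ≤ z <;>
    simp +decide [coinvKey, Prod.Lex.toLex_le_toLex, hx, hy] <;> omega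

lemma triple_des_le_inv (x y z : ℕ) :
    (if 0 < z ∧ z < x then 1 else 0) ≤
      (if y < x then 1 else 0) + (if 0 < z ∧ z < y then 1 else 0) := by
  split_ifs <;> omega

lemma triple_des_eq_inv_iff {x y z : ℕ} (hx : 0 < x) (hy : 0 < y) :
    (if 0 < z ∧ z < x then 1 else 0) =
      (if y < x then 1 else 0) + (if 0 < z ∧ z < y then 1 else 0) ↔
      coinvKey z x ≤ coinvKey z y := by
  rw [coinvKey_le_coinvKey]
  split_ifs <;> grind

def sameRowPairs (μ : List ℕ) : Finset ((ℕ × ℕ) × (ℕ × ℕ)) :=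
  ((cells μ) ×ˢ (cells μ)).filter fun p => p.1.1 = p.2.1 ∧ p.1.2 < p.2.2

section Counting

variable {V : Type} (μ : List ℕ) (Ind : V → V → Prop) [DecidableRel Ind] (σ : ℕ × ℕ → V)

/-- The inversions between rows `i + 1` and `i`, `(i + 1, k)` over `(i, j)` with `j < k`,
correspond to the same-row pairs `((i + 1, j), (i + 1, k))` with a cell below the first. -/
lemma card_invPairs :
    (invPairs μ Ind σ).card = ∑ p ∈ sameRowPairs μ,
      ((if Ind (σ p.1) (σ p.2) then 1 else 0) +
        (if (p.1.1 - 1, p.1.2) ∈ cells μ ∧ Ind (σ p.2) (σ (p.1.1 - 1, p.1.2)) then 1 else 0)) := by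
  rw [sum_add_distrib, ← card_filter, ← card_filter]
  have hsplit : invPairs μ Ind σ =
      (sameRowPairs μ).filter (fun p => Ind (σ p.1) (σ p.2)) ∪
      ((cells μ ×ˢ cells μ).filter fun p =>
        (p.1.1 = p.2.1 + 1 ∧ p.2.2 < p.1.2) ∧ Ind (σ p.1) (σ p.2)) := by
    ext p
    simp only [invPairs, sameRowPairs, mem_union, mem_filter]
    unfold AttackOrd
    tauto
  have hdisj : Disjoint ((sameRowPairs μ).filter (fun p => Ind (σ p.1) (σ p.2)))
      ((cells μ ×ˢ cells μ).filter fun p =>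
        (p.1.1 = p.2.1 + 1 ∧ p.2.2 < p.1.2) ∧ Ind (σ p.1) (σ p.2)) := by
    simp only [disjoint_left, sameRowPairs, mem_filter]
    omega
  rw [hsplit, card_union_of_disjoint hdisj]
  congr 1
  refine card_nbij' (fun p => ((p.2.1 + 1, p.2.2), p.1)) (fun q => (q.2, (q.1.1 - 1, q.1.2)))
    ?_ ?_ ?_ ?_ <;> rintro ⟨⟨a₁, a₂⟩, ⟨b₁, b₂⟩⟩ h <;>
    simp only [mem_coe, sameRowPairs, mem_filter, mem_product] at h ⊢
  · obtain ⟨⟨ha, hb⟩, ⟨rfl, hlt⟩, hind⟩ := h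
    have := mem_cells.1 ha
    have := mem_cells.1 hb
    rw [Nat.add_sub_cancel]
    exact ⟨⟨⟨mem_cells.2 ⟨by omega, by omega, by omega, by omega⟩, ha⟩, rfl, hlt⟩, hb, hind⟩
  · obtain ⟨⟨⟨ha, hb⟩, rfl, hlt⟩, hc, hind⟩ := h
    have := mem_cells.1 ha
    exact ⟨⟨hb, hc⟩, ⟨by omega, hlt⟩, hind⟩
  · simp
  · have := mem_cells.1 h.1.1.1
    simp only [Prod.mk.injEq, and_true]
    omega

lemma sum_arm_desCells :
    ∑ u ∈ desCells μ Ind σ, arm μ u = ∑ p ∈ sameRowPairs μ,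
      (if (p.1.1 - 1, p.1.2) ∈ cells μ ∧ Ind (σ p.1) (σ (p.1.1 - 1, p.1.2)) then 1 else 0) := by
  rw [desCells, sum_filter, sameRowPairs, sum_filter, sum_product]
  refine sum_congr rfl fun u _ => ?_
  rw [arm, card_filter]
  split_ifs with hu
  · exact sum_congr rfl fun v _ => by simp only [eq_comm]
  · exact (sum_eq_zero fun v _ => by simp).symm

end Counting

lemma card_invPairs_eq_sum_arm_iff (μ : List ℕ) {σ : ℕ × ℕ → ℕ}
    (hσ : ∀ u, 0 < σ u ↔ u ∈ cells μ) :
    (invPairs μ natInd σ).card = ∑ u ∈ desCells μ natInd σ, arm μ u ↔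
      ∀ p ∈ sameRowPairs μ,
        coinvKey (σ (p.1.1 - 1, p.1.2)) (σ p.1) ≤ coinvKey (σ (p.1.1 - 1, p.1.2)) (σ p.2) := by
  simp only [card_invPairs, sum_arm_desCells, ← hσ, natInd]
  have hpos : ∀ p ∈ sameRowPairs μ, 0 < σ p.1 ∧ 0 < σ p.2 := fun p hp => by
    simp only [sameRowPairs, mem_filter, mem_product] at hp
    exact ⟨(hσ _).2 hp.1.1, (hσ _).2 hp.1.2⟩
  rw [eq_comm, sum_eq_sum_iff_of_le fun p _ => triple_des_le_inv _ _ _]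
  exact forall₂_congr fun p hp => triple_des_eq_inv_iff (hpos p hp).1 (hpos p hp).2

def rowWord {V : Type} (μ : List ℕ) (σ : ℕ × ℕ → V) (i : ℕ) : List V :=
  (List.range (μ.getD i 0)).map fun j => σ (i + 1, j + 1)

@[simp]
lemma length_rowWord {V : Type} (μ : List ℕ) (σ : ℕ × ℕ → V) (i : ℕ) :
    (rowWord μ σ i).length = μ.getD i 0 := by
  simp [rowWord]

@[simp]
lemma getElem_rowWord {V : Type} (μ : List ℕ) (σ : ℕ × ℕ → V) (i j : ℕ)
    (hj : j < (rowWord μ σ i).length) : (rowWord μ σ i)[j] = σ (i + 1, j + 1) := by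
  simp [rowWord]

lemma forall_sameRowPairs_iff_isGreedy {V β : Type} [LinearOrder β] (μ : List ℕ)
    (σ : ℕ × ℕ → V) (key : ℕ × ℕ → V → β) :
    (∀ p ∈ sameRowPairs μ, key p.1 (σ p.1) ≤ key p.1 (σ p.2)) ↔
      ∀ i < μ.length, IsGreedy (fun j => key (i + 1, j + 1)) (rowWord μ σ i) := by
  constructor
  · intro h i hi j k hjk hk
    rw [length_rowWord] at hk
    simp only [getElem_rowWord]
    refine h ((i + 1, j + 1), (i + 1, k + 1)) ?_
    simp only [sameRowPairs, mem_filter, mem_product, mem_cells, Nat.add_sub_cancel, true_and]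
    omega
  · rintro h ⟨⟨a₁, a₂⟩, ⟨b₁, b₂⟩⟩ hp
    simp only [sameRowPairs, mem_filter, mem_product, mem_cells] at hp
    obtain ⟨⟨⟨ha₁, -, ha₂, -⟩, hb₁, hb₁', hb₂, hb₂'⟩, rfl, hab⟩ := hp
    have := h (a₁ - 1) (by omega) (a₂ - 1) (b₂ - 1) (by omega)
      (by rw [length_rowWord]; omega)
    simp only [getElem_rowWord] at this
    rwa [Nat.sub_add_cancel ha₁, Nat.sub_add_cancel ha₂, Nat.sub_add_cancel hb₂] at this

lemma getD_rowWord_extendF {V : Type} (μ : List ℕ) (d : V) (f : {u // u ∈ cells μ} → V)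
    (i j : ℕ) : (rowWord μ (extendF μ d f) i).getD j d = extendF μ d f (i + 1, j + 1) := by
  by_cases hj : j < μ.getD i 0
  · rw [List.getD_eq_getElem _ _ (by simpa using hj), getElem_rowWord]
  · rw [List.getD_eq_default _ _ (by simpa using hj), extendF_of_notMem]
    simp only [mem_cells, Nat.add_sub_cancel]
    omega

lemma filter_cells_row_val (μ : List ℕ) (i : ℕ) :
    ((cells μ).filter (fun u => u.1 = i + 1)).val =
      (Multiset.range (μ.getD i 0)).map fun j => (i + 1, j + 1) := by
  have hlen : 0 < μ.getD i 0 → i < μ.length := fun h => by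
    by_contra hi
    rw [List.getD_eq_default _ _ (not_lt.1 hi)] at h
    exact h.false
  refine (Multiset.Nodup.ext (nodup _)
    ((Multiset.nodup_range _).map fun a b h => by simpa using h)).2 fun ⟨a, b⟩ => ?_
  simp only [mem_val, mem_filter, mem_cells, Multiset.mem_map, Multiset.mem_range, Prod.mk.injEq]
  constructor
  · rintro ⟨⟨-, -, hb, hb'⟩, rfl⟩
    exact ⟨b - 1, by simp only [Nat.add_sub_cancel] at hb'; omega, rfl, by omega⟩
  · rintro ⟨j, hj, rfl, rfl⟩
    have := hlen (by omega)
    simp only [Nat.add_sub_cancel, and_true]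
    omega

lemma map_filter_attach_cells_row {V : Type} (μ : List ℕ) (d : V) (f : {u // u ∈ cells μ} → V)
    (i : ℕ) :
    Multiset.map f ((cells μ).attach.filter fun u => u.1.1 = i + 1).val =
      ↑(rowWord μ (extendF μ d f) i) := by
  have hval : ((cells μ).filter (fun u => u.1 = i + 1)).val =
      Multiset.map Subtype.val ((cells μ).attach.filter fun u => u.1.1 = i + 1).val := by
    rw [filter_val, filter_val, attach_val]
    conv_lhs => rw [← Multiset.attach_map_val (cells μ).val]
    rw [Multiset.filter_map]
    rfl
  calc Multiset.map f ((cells μ).attach.filter fun u => u.1.1 = i + 1).val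
      = Multiset.map (extendF μ d f) ((cells μ).filter (fun u => u.1 = i + 1)).val := by
        rw [hval, Multiset.map_map]
        exact Multiset.map_congr rfl fun u _ => (extendF_val d f u).symm
    _ = ↑(rowWord μ (extendF μ d f) i) := by
        rw [filter_cells_row_val, Multiset.map_map]
        rfl

lemma extendF_pos_iff {μ : List ℕ} {M : ℕ → Multiset ℕ} (hpos : ∀ i < μ.length, ∀ x ∈ M i, 0 < x)
    {f : {u // u ∈ cells μ} → ℕ} (hrow : ∀ i < μ.length, ↑(rowWord μ (extendF μ 0 f) i) = M i)
    (u : ℕ × ℕ) : 0 < extendF μ 0 f u ↔ u ∈ cells μ := by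
  refine ⟨fun h => by_contra fun hu => by simp [extendF_of_notMem 0 f hu] at h, fun hu => ?_⟩
  obtain ⟨a, b⟩ := u
  obtain ⟨ha, ha', hb, hb'⟩ := mem_cells.1 hu
  have hmem : extendF μ 0 f (a, b) ∈ rowWord μ (extendF μ 0 f) (a - 1) := by
    have h := getD_rowWord_extendF μ 0 f (a - 1) (b - 1)
    rw [Nat.sub_add_cancel ha, Nat.sub_add_cancel hb, List.getD_eq_getElem _ _
      (by rw [length_rowWord]; omega)] at h
    exact h ▸ List.getElem_mem _
  exact hpos (a - 1) (by omega) _ (hrow (a - 1) (by omega) ▸ Multiset.mem_coe.2 hmem)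

def HasGreedyRows (μ : List ℕ) (M : ℕ → Multiset ℕ) (σ : ℕ × ℕ → ℕ) : Prop :=
  ∀ i < μ.length,
    ↑(rowWord μ σ i) = M i ∧ IsGreedy (fun j => coinvKey (σ (i, j + 1))) (rowWord μ σ i)

lemma card_invPairs_eq_sum_arm_iff_isGreedy (μ : List ℕ) {σ : ℕ × ℕ → ℕ}
    (hσ : ∀ u, 0 < σ u ↔ u ∈ cells μ) :
    (invPairs μ natInd σ).card = ∑ u ∈ desCells μ natInd σ, arm μ u ↔
      ∀ i < μ.length, IsGreedy (fun j => coinvKey (σ (i, j + 1))) (rowWord μ σ i) := by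
  rw [card_invPairs_eq_sum_arm_iff μ hσ,
    forall_sameRowPairs_iff_isGreedy μ σ fun u => coinvKey (σ (u.1 - 1, u.2))]
  simp only [Nat.add_sub_cancel]

lemma rowWord_eq_and_card_invPairs_eq_iff {μ : List ℕ} {M : ℕ → Multiset ℕ}
    (hpos : ∀ i < μ.length, ∀ x ∈ M i, 0 < x) (f : {u // u ∈ cells μ} → ℕ) :
    ((∀ i < μ.length, ↑(rowWord μ (extendF μ 0 f) i) = M i) ∧
      (invPairs μ natInd (extendF μ 0 f)).card =
        ∑ u ∈ desCells μ natInd (extendF μ 0 f), arm μ u) ↔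
      HasGreedyRows μ M (extendF μ 0 f) := by
  constructor
  · rintro ⟨hrow, hinv⟩ i hi
    rw [card_invPairs_eq_sum_arm_iff_isGreedy μ (extendF_pos_iff hpos hrow)] at hinv
    exact ⟨hrow i hi, hinv i hi⟩
  · intro h
    have hrow i hi := (h i hi).1
    exact ⟨hrow, (card_invPairs_eq_sum_arm_iff_isGreedy μ (extendF_pos_iff hpos hrow)).2
      fun i hi => (h i hi).2⟩

-- Row `i` of the non-inverted filling; the empty row `0` reads as zeros, like `extendF μ 0`.
noncomputable def canonRow (M : ℕ → Multiset ℕ) : ℕ → List ℕ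
  | 0 => []
  | i + 1 => (existsUnique_isGreedy (fun j => coinvKey ((canonRow M i).getD j 0))
      (fun _ => coinvKey_injective _) (M i)).choose

lemma canonRow_succ_spec (M : ℕ → Multiset ℕ) (i : ℕ) :
    ↑(canonRow M (i + 1)) = M i ∧
      IsGreedy (fun j => coinvKey ((canonRow M i).getD j 0)) (canonRow M (i + 1)) :=
  (existsUnique_isGreedy _ (fun _ => coinvKey_injective _) (M i)).choose_spec.1

lemma eq_canonRow_succ {M : ℕ → Multiset ℕ} {i : ℕ} {w : List ℕ} (hw : ↑w = M i)
    (hg : IsGreedy (fun j => coinvKey ((canonRow M i).getD j 0)) w) : w = canonRow M (i + 1) :=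
  (existsUnique_isGreedy _ (fun _ => coinvKey_injective _) (M i)).choose_spec.2 w ⟨hw, hg⟩

lemma extendF_eq_canonRow {μ : List ℕ} {M : ℕ → Multiset ℕ} {f : {u // u ∈ cells μ} → ℕ}
    (h : HasGreedyRows μ M (extendF μ 0 f)) :
    ∀ i ≤ μ.length, ∀ j, extendF μ 0 f (i, j + 1) = (canonRow M i).getD j 0 := by
  intro i
  induction i with
  | zero =>
    intro _ j
    rw [extendF_of_notMem 0 f (by simp [mem_cells])]
    rfl
  | succ i ih =>
    intro hi j
    have hg := (h i hi).2
    simp only [ih (Nat.le_of_succ_le hi)] at hg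
    rw [← getD_rowWord_extendF, eq_canonRow_succ (h i hi).1 hg]

noncomputable def canonFilling (μ : List ℕ) (M : ℕ → Multiset ℕ) : {u // u ∈ cells μ} → ℕ :=
  fun u => (canonRow M u.1.1).getD (u.1.2 - 1) 0

lemma length_canonRow {μ : List ℕ} {M : ℕ → Multiset ℕ}
    (hcard : ∀ i < μ.length, Multiset.card (M i) = μ.getD i 0) {i : ℕ} (hi : i < μ.length) :
    (canonRow M (i + 1)).length = μ.getD i 0 := by
  rw [← hcard i hi, ← (canonRow_succ_spec M i).1, Multiset.coe_card]

lemma extendF_canonFilling {μ : List ℕ} {M : ℕ → Multiset ℕ}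
    (hcard : ∀ i < μ.length, Multiset.card (M i) = μ.getD i 0) :
    ∀ i ≤ μ.length, ∀ j, extendF μ 0 (canonFilling μ M) (i, j + 1) = (canonRow M i).getD j 0 := by
  intro i hi j
  by_cases hu : (i, j + 1) ∈ cells μ
  · exact extendF_val 0 _ ⟨_, hu⟩
  rw [extendF_of_notMem 0 _ hu]
  obtain _ | i := i
  · rfl
  simp only [mem_cells, Nat.add_sub_cancel] at hu
  rw [List.getD_eq_default _ _ (by rw [length_canonRow hcard (by omega)]; omega)]

lemma rowWord_canonFilling {μ : List ℕ} {M : ℕ → Multiset ℕ}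
    (hcard : ∀ i < μ.length, Multiset.card (M i) = μ.getD i 0) {i : ℕ} (hi : i < μ.length) :
    rowWord μ (extendF μ 0 (canonFilling μ M)) i = canonRow M (i + 1) := by
  refine List.ext_getElem (by rw [length_rowWord, length_canonRow hcard hi]) fun j h₁ h₂ => ?_
  rw [← List.getD_eq_getElem _ 0 h₁, ← List.getD_eq_getElem _ 0 h₂, getD_rowWord_extendF,
    extendF_canonFilling hcard (i + 1) hi]

lemma hasGreedyRows_canonFilling {μ : List ℕ} {M : ℕ → Multiset ℕ}
    (hcard : ∀ i < μ.length, Multiset.card (M i) = μ.getD i 0) :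
    HasGreedyRows μ M (extendF μ 0 (canonFilling μ M)) := by
  intro i hi
  simp only [rowWord_canonFilling hcard hi, extendF_canonFilling hcard i hi.le]
  exact canonRow_succ_spec M i

lemma eq_of_extendF_eq {μ : List ℕ} {f g : {u // u ∈ cells μ} → ℕ}
    (h : ∀ i ≤ μ.length, ∀ j, extendF μ 0 f (i, j + 1) = extendF μ 0 g (i, j + 1)) : f = g := by
  funext ⟨⟨a, b⟩, hu⟩
  obtain ⟨-, ha, hb, -⟩ := mem_cells.1 hu
  have := h a ha (b - 1)
  rwa [Nat.sub_add_cancel hb, extendF_val 0 f ⟨_, hu⟩, extendF_val 0 g ⟨_, hu⟩] at this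

theorem existsUnique_noninverted_filling_general (μ : List ℕ)
    (M : Fin μ.length → Multiset ℕ)
    (hcard : ∀ i, (M i).card = μ.getD i.val 0)
    (hpos : ∀ i, ∀ x ∈ M i, 0 < x) :
    ∃! f : {u // u ∈ cells μ} → ℕ,
      (∀ i : Fin μ.length,
        Multiset.map f ((cells μ).attach.filter fun u => u.1.1 = i.val + 1).val = M i) ∧
      (invPairs μ natInd (extendF μ 0 f)).card
        = ∑ u ∈ desCells μ natInd (extendF μ 0 f), arm μ u := by
  set M' : ℕ → Multiset ℕ := fun i => if h : i < μ.length then M ⟨i, h⟩ else 0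
  have hM' : ∀ i (hi : i < μ.length), M' i = M ⟨i, hi⟩ := fun i hi => dif_pos hi
  have hcard' : ∀ i < μ.length, Multiset.card (M' i) = μ.getD i 0 := fun i hi => by
    rw [hM' i hi, hcard]
  have hpos' : ∀ i < μ.length, ∀ x ∈ M' i, 0 < x := fun i hi => hM' i hi ▸ hpos ⟨i, hi⟩
  have hchar : ∀ f : {u // u ∈ cells μ} → ℕ,
      ((∀ i : Fin μ.length,
        Multiset.map f ((cells μ).attach.filter fun u => u.1.1 = i.val + 1).val = M i) ∧
      (invPairs μ natInd (extendF μ 0 f)).card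
        = ∑ u ∈ desCells μ natInd (extendF μ 0 f), arm μ u) ↔
      HasGreedyRows μ M' (extendF μ 0 f) := fun f => by
    simp only [map_filter_attach_cells_row μ 0 f]
    simp only [Fin.forall_iff, ← hM']
    exact rowWord_eq_and_card_invPairs_eq_iff hpos' f
  refine ⟨canonFilling μ M', (hchar _).2 (hasGreedyRows_canonFilling hcard'), fun f hf => ?_⟩
  exact eq_of_extendF_eq fun i hi j => (extendF_eq_canonRow ((hchar f).1 hf) i hi j).trans
    (extendF_canonFilling hcard' i hi j).symm

/-- Let `μ` be a partition of length `l` and, for each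
`i = 1,…,l`, let `M_i` be a multiset of `μ_i` positive integers.  Then there is
a unique filling `σ : dg(μ) → ℤ₊` whose multiset of entries in row `i` is `M_i`
for each `i` and which satisfies `inv(σ) = 0` (i.e. `|Inv(σ)| = Σ_{u ∈ Des(σ)} arm(u)`). -/
theorem existsUnique_noninverted_filling (μ : List ℕ) (hμ : IsPartitionList μ)
    (M : Fin μ.length → Multiset ℕ)
    (hcard : ∀ i, (M i).card = μ.getD i.val 0)
    (hpos : ∀ i, ∀ x ∈ M i, 0 < x) :
    ∃! f : {u // u ∈ cells μ} → ℕ,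
      (∀ i : Fin μ.length,
        Multiset.map f ((cells μ).attach.filter fun u => u.1.1 = i.val + 1).val = M i) ∧
      (invPairs μ natInd (extendF μ 0 f)).card
        = ∑ u ∈ desCells μ natInd (extendF μ 0 f), arm μ u :=
  existsUnique_noninverted_filling_general μ M hcard hpos

end HHL
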